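/- Let p be a prime, m ∈ ℕ ∪ {∞}, and s ∈ ℂ with 0 < |s| < 1 be such that Δ_s^{(m)} > 0. Then for all x, y ∈ ℚ_p with x ≠ y, Δ_s^{(m)}·|s|^{v(x−y)} ≤ |Υ_s^{(m)}(x) − Υ_s^{(m)}(y)| ≤ (2/(1−|s|))·|s|^{v(x−y)}; hence Υ_s^{(m)} is a bi-Lipschitz embedding of (ℚ_p, |·|_p^{1/D_s}) into ℂ (in particular Υ_s^{(m)} is injective and a homeomorphism onto its image). -/

import Mathlib

open scoped ENNReal MeasureTheory

noncomputable section

/-- The digit expansion of `p`-adic numbers: `digit x n` is the coefficient of `pⁿ`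
in the canonical expansion `x = Σ_{n ≥ v(x)} (digit x n)·pⁿ` with digits in `{0,…,p−1}`. -/
structure PadicDigits (p : ℕ) [Fact p.Prime] : Type where
  digit : ℚ_[p] → ℤ → ℕ
  digit_lt : ∀ x n, digit x n < p
  digit_zero : ∀ n, digit 0 n = 0
  digit_eq_zero_of_lt : ∀ x : ℚ_[p], x ≠ 0 → ∀ n : ℤ, n < x.valuation → digit x n = 0
  digit_valuation_ne_zero : ∀ x : ℚ_[p], x ≠ 0 → digit x x.valuation ≠ 0
  expansion : ∀ x : ℚ_[p], x = ∑' n : ℤ, (digit x n : ℚ_[p]) * (p : ℚ_[p]) ^ n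

variable {p : ℕ} [Fact p.Prime]

/-- `χ_n^{(m)}(x) = exp((2πi/p) Σ_{k=0}^{m} x_{n−k} p^{−k})`, where `m ∈ ℕ ∪ {∞}`. -/
def chiFn (D : PadicDigits p) (m : ℕ∞) (x : ℚ_[p]) (n : ℤ) : ℂ :=
  Complex.exp (((2 * Real.pi / p *
      ∑' k : ℕ, if (k : ℕ∞) ≤ m then (D.digit x (n - k) : ℝ) / (p : ℝ) ^ k else 0 : ℝ) : ℂ)
    * Complex.I)

/-- `Υ_s^{(m)}(x) = Σ_{n<0} sⁿ(χ_n^{(m)}(x) − 1) + Σ_{n≥0} sⁿ χ_n^{(m)}(x)`. -/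
def Upsilon (D : PadicDigits p) (m : ℕ∞) (s : ℂ) (x : ℚ_[p]) : ℂ :=
  ∑' n : ℤ, s ^ n * (chiFn D m x n - if n < 0 then 1 else 0)

/-- `Δ_s^{(m)} = inf{ |Υ_s^{(m)}(x) − Υ_s^{(m)}(y)| : x, y ∈ ℚ_p, |x−y|_p = 1 }`. -/
def Delta (D : PadicDigits p) (m : ℕ∞) (s : ℂ) : ℝ :=
  sInf {r : ℝ | ∃ x y : ℚ_[p], ‖x - y‖ = 1 ∧
    r = ‖Upsilon D m s x - Upsilon D m s y‖}

/-- The scaling dimension `D_s = −1/log_p |s|`. -/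
def scalingDim (p : ℕ) (s : ℂ) : ℝ := -1 / Real.logb p (‖s‖)

section Helpers

lemma hasSum_geom_int {r : ℝ} (hr0 : 0 < r) (hr1 : r < 1) (N : ℤ) (c : ℝ) :
    HasSum (fun n : ℤ => if N ≤ n then c * r ^ n else 0) (c * r ^ N / (1 - r)) := by
  have hi : Function.Injective (fun k : ℕ => N + (k : ℤ)) := by
    intro a b h; simpa using h
  have hzero : ∀ n ∉ Set.range (fun k : ℕ => N + (k : ℤ)),
      (if N ≤ n then c * r ^ n else 0) = 0 := by
    intro n hn
    rw [if_neg]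
    intro hNn
    exact hn ⟨(n - N).toNat, by simp; omega⟩
  rw [← hi.hasSum_iff hzero]
  have h0 : HasSum (fun k : ℕ => r ^ k) (1 - r)⁻¹ := hasSum_geometric_of_lt_one hr0.le hr1
  have h1 := h0.mul_left (c * r ^ N)
  rw [div_eq_mul_inv]
  refine h1.congr_fun fun k => ?_
  simp only [Function.comp_apply, if_pos (by omega : N ≤ N + (k:ℤ))]
  rw [zpow_add₀ (ne_of_gt hr0), zpow_natCast]
  ring

lemma coeff_norm_le (c : ℤ) (n : ℤ) :
    ‖(c : ℚ_[p]) * (p : ℚ_[p]) ^ n‖ ≤ ((p : ℝ)⁻¹) ^ n := by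
  rw [norm_mul, Padic.norm_p_zpow, inv_zpow, ← zpow_neg]
  calc ‖((c : ℚ_[p]))‖ * (p:ℝ) ^ (-n) ≤ 1 * (p:ℝ) ^ (-n) := by
        apply mul_le_mul_of_nonneg_right (Padic.norm_int_le_one c)
        positivity
    _ = (p:ℝ) ^ (-n) := one_mul _

lemma summable_coeff (c : ℤ → ℤ) (N : ℤ) (h0 : ∀ n < N, c n = 0) :
    Summable (fun n : ℤ => (c n : ℚ_[p]) * (p : ℚ_[p]) ^ n) := by
  have hp1 : (1:ℝ) < p := by exact_mod_cast (Fact.out : p.Prime).one_lt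
  have hr0 : (0:ℝ) < (p:ℝ)⁻¹ := by positivity
  have hr1 : ((p:ℝ))⁻¹ < 1 := by
    rw [inv_lt_one_iff₀]; right; exact hp1
  apply Summable.of_norm_bounded ((hasSum_geom_int hr0 hr1 N 1).summable)
  intro n
  by_cases hn : N ≤ n
  · rw [if_pos hn, one_mul]; exact coeff_norm_le _ _
  · rw [if_neg hn, h0 n (by omega)]
    simp

lemma norm_tsum_coeff (c : ℤ → ℤ) (hc : ∀ n, (c n).natAbs < p) (N : ℤ)
    (h0 : ∀ n < N, c n = 0) (hN : c N ≠ 0) :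
    ‖∑' n : ℤ, (c n : ℚ_[p]) * (p : ℚ_[p]) ^ n‖ = (p : ℝ) ^ (-N) := by
  have hp1 : (1:ℝ) < p := by exact_mod_cast (Fact.out : p.Prime).one_lt
  have hsum := summable_coeff (p := p) c N h0
  rw [hsum.tsum_eq_add_tsum_ite N]
  have hrest : ‖∑' n : ℤ, if n = N then 0 else (c n : ℚ_[p]) * (p : ℚ_[p]) ^ n‖
      ≤ (p : ℝ) ^ (-(N+1)) := by
    apply IsUltrametricDist.norm_tsum_le_of_forall_le_of_nonneg (by positivity)
    intro n
    by_cases hn : n = N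
    · simp [hn]; positivity
    · rw [if_neg hn]
      by_cases hn2 : n < N
      · rw [h0 n hn2]; simp; positivity
      · refine (coeff_norm_le _ _).trans ?_
        rw [inv_zpow, ← zpow_neg]
        exact zpow_le_zpow_right₀ hp1.le (by omega)
  have hhead : ‖(c N : ℚ_[p]) * (p : ℚ_[p]) ^ N‖ = (p : ℝ) ^ (-N) := by
    rw [norm_mul, Padic.norm_p_zpow]
    have h1 : ‖((c N : ℚ_[p]))‖ = 1 := by
      refine le_antisymm (Padic.norm_int_le_one _) ?_
      by_contra hlt
      push_neg at hlt
      have hdvd := (Padic.norm_intCast_lt_one_iff).mp hlt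
      have h2 : p ∣ (c N).natAbs := by
        have := Int.natAbs_dvd_natAbs.mpr hdvd
        simpa using this
      have h3 : (c N).natAbs ≠ 0 := Int.natAbs_ne_zero.mpr hN
      have := Nat.le_of_dvd (Nat.pos_of_ne_zero h3) h2
      have := hc N
      omega
    rw [h1, one_mul]
  have hlt : ‖∑' n : ℤ, if n = N then 0 else (c n : ℚ_[p]) * (p : ℚ_[p]) ^ n‖
      < ‖(c N : ℚ_[p]) * (p : ℚ_[p]) ^ N‖ := by
    refine hrest.trans_lt ?_
    rw [hhead]
    apply zpow_lt_zpow_right₀ hp1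
    omega
  rw [IsUltrametricDist.norm_add_eq_max_of_norm_ne_norm hlt.ne', max_eq_left hlt.le, hhead]

open Classical in
/-- Lower support bound for the digits of `x`. -/
def digitBound (x : ℚ_[p]) : ℤ := if x = 0 then 0 else x.valuation

lemma digit_zero_of_lt_bound (D : PadicDigits p) (x : ℚ_[p]) {n : ℤ} (hn : n < digitBound x) :
    D.digit x n = 0 := by
  by_cases hx : x = 0
  · rw [hx]; exact D.digit_zero n
  · rw [digitBound, if_neg hx] at hn
    exact D.digit_eq_zero_of_lt x hx n hn

lemma summable_expansion (D : PadicDigits p) (x : ℚ_[p]) :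
    Summable (fun n : ℤ => (D.digit x n : ℚ_[p]) * (p : ℚ_[p]) ^ n) := by
  have := summable_coeff (p := p) (fun n => (D.digit x n : ℤ)) (digitBound x)
    (fun n hn => by simp [digit_zero_of_lt_bound D x hn])
  simpa using this

lemma digit_unique (D : PadicDigits p) (x : ℚ_[p]) (c : ℤ → ℕ) (hc : ∀ n, c n < p) (N : ℤ)
    (h0 : ∀ n < N, c n = 0) (hx : x = ∑' n : ℤ, (c n : ℚ_[p]) * (p : ℚ_[p]) ^ n) :
    ∀ n, D.digit x n = c n := by
  by_contra hne
  push_neg at hne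
  set e : ℤ → ℤ := fun n => (D.digit x n : ℤ) - (c n : ℤ) with he
  have hbdd : ∀ z : ℤ, e z ≠ 0 → min N (digitBound x) ≤ z := by
    intro z hz
    by_contra hzlt
    push_neg at hzlt
    apply hz
    rw [he]
    simp only
    rw [digit_zero_of_lt_bound D x (lt_of_lt_of_le hzlt (min_le_right _ _)),
      h0 z (lt_of_lt_of_le hzlt (min_le_left _ _))]
    simp
  obtain ⟨n₀, hn₀, hleast⟩ := Int.exists_least_of_bdd (P := fun z => e z ≠ 0)
    ⟨min N (digitBound x), hbdd⟩ (by
      obtain ⟨n, hn⟩ := hne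
      exact ⟨n, by simp [he]; omega⟩)
  have hzero : (0 : ℚ_[p]) = ∑' n : ℤ, (e n : ℚ_[p]) * (p : ℚ_[p]) ^ n := by
    have h1 := summable_expansion D x
    have h2 := summable_coeff (p := p) (fun n => (c n : ℤ)) N
      (fun n hn => by simp [h0 n hn])
    have : (fun n : ℤ => (e n : ℚ_[p]) * (p : ℚ_[p]) ^ n)
        = fun n : ℤ => (D.digit x n : ℚ_[p]) * (p : ℚ_[p]) ^ n
          - ((c n : ℤ) : ℚ_[p]) * (p : ℚ_[p]) ^ n := by
      funext n; push_cast [he]; ring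
    rw [this, h1.tsum_sub h2]
    have hx2 : x = ∑' n : ℤ, ((c n : ℤ) : ℚ_[p]) * (p : ℚ_[p]) ^ n := by
      rw [hx]; push_cast; rfl
    rw [← D.expansion x, ← hx2]
    ring
  have hnorm := norm_tsum_coeff (p := p) e
    (fun n => by have := D.digit_lt x n; have := hc n; simp [he]; omega) n₀
    (fun n hn => by by_contra h; exact absurd (hleast n h) (by omega)) hn₀
  rw [← hzero] at hnorm
  simp at hnorm
  have hp0 : (0:ℝ) < (p:ℝ) := by exact_mod_cast (Fact.out : p.Prime).pos
  exact absurd hnorm.symm (ne_of_lt (zpow_pos hp0 _)).symm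

lemma digit_shift (D : PadicDigits p) (z : ℚ_[p]) (n : ℤ) :
    D.digit ((p : ℚ_[p]) * z) n = D.digit z (n - 1) := by
  have hpne : (p : ℚ_[p]) ≠ 0 := by
    exact_mod_cast (Nat.cast_ne_zero (R := ℚ_[p])).mpr (Fact.out : p.Prime).ne_zero
  have hx : (p : ℚ_[p]) * z = ∑' n : ℤ, ((D.digit z (n - 1) : ℚ_[p])) * (p : ℚ_[p]) ^ n := by
    have h1 : (p : ℚ_[p]) * z
        = ∑' m : ℤ, (D.digit z m : ℚ_[p]) * (p : ℚ_[p]) ^ (m + 1) := by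
      conv_lhs => rw [D.expansion z]
      rw [← tsum_mul_left]
      congr 1
      funext m
      rw [zpow_add₀ hpne, zpow_one]
      ring
    rw [h1, ← (Equiv.addRight (1 : ℤ)).tsum_eq
      (fun n : ℤ => (D.digit z (n - 1) : ℚ_[p]) * (p : ℚ_[p]) ^ n)]
    congr 1
    funext m
    simp
  exact digit_unique D _ (fun n => D.digit z (n - 1)) (fun n => D.digit_lt z (n - 1))
    (digitBound z + 1)
    (fun n hn => digit_zero_of_lt_bound D z (by omega)) hx n

lemma digit_eq_of_lt_val (D : PadicDigits p) (x y : ℚ_[p]) (hxy : x ≠ y) :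
    ∀ n < (x - y).valuation, D.digit x n = D.digit y n := by
  have hp1 : (1:ℝ) < p := by exact_mod_cast (Fact.out : p.Prime).one_lt
  set e : ℤ → ℤ := fun n => (D.digit x n : ℤ) - (D.digit y n : ℤ) with he
  have hxy0 : x - y ≠ 0 := sub_ne_zero_of_ne hxy
  have hsub : x - y = ∑' n : ℤ, (e n : ℚ_[p]) * (p : ℚ_[p]) ^ n := by
    have h1 := summable_expansion D x
    have h2 := summable_expansion D y
    have : (fun n : ℤ => (e n : ℚ_[p]) * (p : ℚ_[p]) ^ n)
        = fun n : ℤ => (D.digit x n : ℚ_[p]) * (p : ℚ_[p]) ^ n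
          - (D.digit y n : ℚ_[p]) * (p : ℚ_[p]) ^ n := by
      funext n; push_cast [he]; ring
    rw [this, h1.tsum_sub h2, ← D.expansion x, ← D.expansion y]
  have hne : ∃ n, e n ≠ 0 := by
    by_contra hall
    push_neg at hall
    apply hxy0
    rw [hsub]
    simp only [hall]
    simp
  have hbdd : ∀ z : ℤ, e z ≠ 0 → min (digitBound x) (digitBound y) ≤ z := by
    intro z hz
    by_contra hzlt
    push_neg at hzlt
    apply hz
    rw [he]
    simp only
    rw [digit_zero_of_lt_bound D x (lt_of_lt_of_le hzlt (min_le_left _ _)),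
      digit_zero_of_lt_bound D y (lt_of_lt_of_le hzlt (min_le_right _ _))]
    simp
  obtain ⟨n₀, hn₀, hleast⟩ := Int.exists_least_of_bdd (P := fun z => e z ≠ 0)
    ⟨_, hbdd⟩ hne
  have hnorm := norm_tsum_coeff (p := p) e
    (fun n => by have := D.digit_lt x n; have := D.digit_lt y n; simp [he]; omega) n₀
    (fun n hn => by by_contra h; exact absurd (hleast n h) (by omega)) hn₀
  rw [← hsub, Padic.norm_eq_zpow_neg_valuation hxy0] at hnorm
  have hval : (x - y).valuation = n₀ := by
    have := zpow_right_injective₀ (by positivity : (0:ℝ) < (p:ℝ)) (ne_of_gt hp1) hnorm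
    omega
  intro n hn
  by_contra h
  have : e n ≠ 0 := by simp [he]; omega
  have := hleast n this
  omega

lemma chi_abs (D : PadicDigits p) (m : ℕ∞) (x : ℚ_[p]) (n : ℤ) :
    ‖chiFn D m x n‖ = 1 := by
  rw [chiFn, Complex.norm_exp_ofReal_mul_I]

lemma chi_congr (D : PadicDigits p) (m : ℕ∞) (x y : ℚ_[p]) (n : ℤ)
    (h : ∀ j ≤ n, D.digit x j = D.digit y j) : chiFn D m x n = chiFn D m y n := by
  have hk : ∀ k : ℕ, D.digit x (n - k) = D.digit y (n - k) := fun k => h _ (by omega)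
  rw [chiFn, chiFn]
  have : (∑' k : ℕ, if (k : ℕ∞) ≤ m then (D.digit x (n - k) : ℝ) / (p : ℝ) ^ k else 0)
      = ∑' k : ℕ, if (k : ℕ∞) ≤ m then (D.digit y (n - k) : ℝ) / (p : ℝ) ^ k else 0 :=
    tsum_congr fun k => by rw [hk k]
  rw [this]

lemma chi_one (D : PadicDigits p) (m : ℕ∞) (x : ℚ_[p]) (n : ℤ)
    (h : ∀ j ≤ n, D.digit x j = 0) : chiFn D m x n = 1 := by
  have hk : ∀ k : ℕ, D.digit x (n - k) = 0 := fun k => h _ (by omega)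
  rw [chiFn]
  have : (∑' k : ℕ, if (k : ℕ∞) ≤ m then (D.digit x (n - k) : ℝ) / (p : ℝ) ^ k else 0) = 0 := by
    have : ∀ k : ℕ, (if (k : ℕ∞) ≤ m then (D.digit x (n - k) : ℝ) / (p : ℝ) ^ k else 0) = 0 := by
      intro k
      rw [hk k]
      simp
    rw [tsum_congr this, tsum_zero]
  rw [this]
  simp

lemma chi_shift (D : PadicDigits p) (m : ℕ∞) (z : ℚ_[p]) (n : ℤ) :
    chiFn D m ((p : ℚ_[p]) * z) n = chiFn D m z (n - 1) := by
  rw [chiFn, chiFn]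
  have : (∑' k : ℕ, if (k : ℕ∞) ≤ m then (D.digit ((p:ℚ_[p]) * z) (n - k) : ℝ) / (p : ℝ) ^ k else 0)
      = ∑' k : ℕ, if (k : ℕ∞) ≤ m then (D.digit z (n - 1 - k) : ℝ) / (p : ℝ) ^ k else 0 :=
    tsum_congr fun k => by
      rw [digit_shift D z (n - k)]
      have h : n - (k:ℤ) - 1 = n - 1 - k := by omega
      rw [h]
  rw [this]

lemma upsilon_term_eq_zero (D : PadicDigits p) (m : ℕ∞) (s : ℂ) (x : ℚ_[p]) (n : ℤ)
    (hn : n < min (digitBound x) 0) :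
    s ^ n * (chiFn D m x n - if n < 0 then 1 else 0) = 0 := by
  rw [if_pos (by omega : n < 0),
    chi_one D m x n (fun j hj => digit_zero_of_lt_bound D x (by omega))]
  simp

lemma upsilon_norm_le (D : PadicDigits p) (m : ℕ∞) (s : ℂ) (x : ℚ_[p]) (n : ℤ) :
    ‖s ^ n * (chiFn D m x n - if n < 0 then 1 else 0)‖ ≤ 2 * ‖s‖ ^ n := by
  rw [norm_mul, norm_zpow]
  have h1 : ‖chiFn D m x n - if n < 0 then 1 else 0‖ ≤ 2 := by
    refine (norm_sub_le _ _).trans ?_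
    have h2 : ‖chiFn D m x n‖ = 1 := chi_abs D m x n
    have h3 : ‖(if n < 0 then (1:ℂ) else 0)‖ ≤ 1 := by
      split <;> simp
    linarith
  calc ‖s‖ ^ n * ‖chiFn D m x n - if n < 0 then 1 else 0‖ ≤ ‖s‖ ^ n * 2 := by
        apply mul_le_mul_of_nonneg_left h1
        positivity
    _ = 2 * ‖s‖ ^ n := by ring

lemma upsilon_summable (D : PadicDigits p) (m : ℕ∞) {s : ℂ} (hs0 : 0 < ‖s‖)
    (hs1 : ‖s‖ < 1) (x : ℚ_[p]) :
    Summable (fun n : ℤ => s ^ n * (chiFn D m x n - if n < 0 then 1 else 0)) := by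
  apply Summable.of_norm_bounded ((hasSum_geom_int hs0 hs1 (min (digitBound x) 0) 2).summable)
  intro n
  by_cases hn : min (digitBound x) 0 ≤ n
  · rw [if_pos hn]
    exact upsilon_norm_le D m s x n
  · rw [if_neg hn, upsilon_term_eq_zero D m s x n (by omega)]
    simp

lemma upsilon_shift (D : PadicDigits p) (m : ℕ∞) {s : ℂ} (hs0 : 0 < ‖s‖)
    (hs1 : ‖s‖ < 1) (z : ℚ_[p]) :
    Upsilon D m s ((p : ℚ_[p]) * z) = s * Upsilon D m s z + 1 := by
  have hsne : s ≠ 0 := by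
    intro h; rw [h] at hs0; simp at hs0
  rw [Upsilon]
  have h1 : (fun n : ℤ => s ^ n * (chiFn D m ((p:ℚ_[p]) * z) n - if n < 0 then 1 else 0))
      = fun n : ℤ => s ^ n * (chiFn D m z (n - 1) - if n < 0 then 1 else 0) := by
    funext n
    rw [chi_shift]
  rw [h1, ← (Equiv.addRight (1 : ℤ)).tsum_eq
    (fun n : ℤ => s ^ n * (chiFn D m z (n - 1) - if n < 0 then 1 else 0))]
  have h2 : ∀ k : ℤ, s ^ (k + 1) * (chiFn D m z (k + 1 - 1) - if k + 1 < 0 then 1 else 0)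
      = s * (s ^ k * (chiFn D m z k - if k < 0 then 1 else 0))
        + (if k = -1 then 1 else 0) := by
    intro k
    have hk1 : k + 1 - 1 = k := by omega
    rw [hk1, zpow_add₀ hsne, zpow_one]
    by_cases hk : k = -1
    · subst hk
      rw [if_neg (by omega), if_pos (by omega), if_pos rfl]
      rw [zpow_neg, zpow_one]
      field_simp
      ring
    · have : ((k + 1 < 0) ↔ (k < 0)) := by omega
      rw [if_neg hk]
      by_cases hk0 : k < 0
      · rw [if_pos hk0, if_pos (by omega)]; ring
      · rw [if_neg hk0, if_neg (by omega)]; ring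
  have hsum1 : Summable (fun k : ℤ =>
      s * (s ^ k * (chiFn D m z k - if k < 0 then 1 else 0))) :=
    (upsilon_summable D m hs0 hs1 z).mul_left s
  have hsum2 : Summable (fun k : ℤ => (if k = -1 then (1:ℂ) else 0)) :=
    (hasSum_ite_eq (-1 : ℤ) (1:ℂ)).summable
  calc (∑' k : ℤ, ((fun n : ℤ => s ^ n * (chiFn D m z (n - 1) - if n < 0 then 1 else 0))
          ((Equiv.addRight (1:ℤ)) k)))
      = ∑' k : ℤ, (s * (s ^ k * (chiFn D m z k - if k < 0 then 1 else 0))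
        + (if k = -1 then 1 else 0)) := by
        apply tsum_congr
        intro k
        exact h2 k
    _ = s * Upsilon D m s z + 1 := by
        rw [hsum1.tsum_add hsum2, tsum_mul_left, (hasSum_ite_eq (-1 : ℤ) (1:ℂ)).tsum_eq, Upsilon]

lemma upsilon_scale (D : PadicDigits p) (m : ℕ∞) {s : ℂ} (hs0 : 0 < ‖s‖)
    (hs1 : ‖s‖ < 1) (v : ℤ) (z w : ℚ_[p]) :
    Upsilon D m s ((p : ℚ_[p]) ^ v * z) - Upsilon D m s ((p : ℚ_[p]) ^ v * w)
      = s ^ v * (Upsilon D m s z - Upsilon D m s w) := by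
  have hsne : s ≠ 0 := by intro h; rw [h] at hs0; simp at hs0
  have hpne : (p : ℚ_[p]) ≠ 0 := by
    exact_mod_cast (Nat.cast_ne_zero (R := ℚ_[p])).mpr (Fact.out : p.Prime).ne_zero
  induction v using Int.induction_on with
  | zero => simp
  | succ k ih =>
    have hz' : (p:ℚ_[p]) ^ ((k:ℤ)+1) * z = (p:ℚ_[p]) * ((p:ℚ_[p]) ^ (k:ℤ) * z) := by
      rw [zpow_add₀ hpne, zpow_one]; ring
    have hw' : (p:ℚ_[p]) ^ ((k:ℤ)+1) * w = (p:ℚ_[p]) * ((p:ℚ_[p]) ^ (k:ℤ) * w) := by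
      rw [zpow_add₀ hpne, zpow_one]; ring
    rw [hz', hw', upsilon_shift D m hs0 hs1, upsilon_shift D m hs0 hs1,
      zpow_add₀ hsne, zpow_one]
    calc s * Upsilon D m s ((p:ℚ_[p]) ^ (k:ℤ) * z) + 1
          - (s * Upsilon D m s ((p:ℚ_[p]) ^ (k:ℤ) * w) + 1)
        = s * (Upsilon D m s ((p:ℚ_[p]) ^ (k:ℤ) * z)
          - Upsilon D m s ((p:ℚ_[p]) ^ (k:ℤ) * w)) := by ring
      _ = s ^ (k:ℤ) * s * (Upsilon D m s z - Upsilon D m s w) := by rw [ih]; ring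
  | pred k ih =>
    have hz' : (p:ℚ_[p]) ^ (-(k:ℤ)) * z = (p:ℚ_[p]) * ((p:ℚ_[p]) ^ (-(k:ℤ)-1) * z) := by
      rw [show -(k:ℤ) = (-(k:ℤ)-1) + 1 by ring, zpow_add₀ hpne, zpow_one]; ring
    have hw' : (p:ℚ_[p]) ^ (-(k:ℤ)) * w = (p:ℚ_[p]) * ((p:ℚ_[p]) ^ (-(k:ℤ)-1) * w) := by
      rw [show -(k:ℤ) = (-(k:ℤ)-1) + 1 by ring, zpow_add₀ hpne, zpow_one]; ring
    rw [hz', hw', upsilon_shift D m hs0 hs1, upsilon_shift D m hs0 hs1] at ih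
    apply mul_left_cancel₀ hsne
    calc s * (Upsilon D m s ((p:ℚ_[p]) ^ (-(k:ℤ)-1) * z)
          - Upsilon D m s ((p:ℚ_[p]) ^ (-(k:ℤ)-1) * w))
        = s * Upsilon D m s ((p:ℚ_[p]) ^ (-(k:ℤ)-1) * z) + 1
          - (s * Upsilon D m s ((p:ℚ_[p]) ^ (-(k:ℤ)-1) * w) + 1) := by ring
      _ = s ^ (-(k:ℤ)) * (Upsilon D m s z - Upsilon D m s w) := ih
      _ = s * (s ^ (-(k:ℤ)-1) * (Upsilon D m s z - Upsilon D m s w)) := by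
          rw [show -(k:ℤ) = 1 + (-(k:ℤ)-1) by ring, zpow_add₀ hsne, zpow_one]; ring

lemma delta_bddBelow (D : PadicDigits p) (m : ℕ∞) (s : ℂ) :
    BddBelow {r : ℝ | ∃ x y : ℚ_[p], ‖x - y‖ = 1 ∧
      r = ‖Upsilon D m s x - Upsilon D m s y‖} := by
  refine ⟨0, fun r hr => ?_⟩
  obtain ⟨x, y, _, hr⟩ := hr
  rw [hr]
  positivity

lemma upsilon_lower (D : PadicDigits p) (m : ℕ∞) {s : ℂ} (hs0 : 0 < ‖s‖)
    (hs1 : ‖s‖ < 1) (x y : ℚ_[p]) (hxy : x ≠ y) :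
    Delta D m s * ‖s‖ ^ ((x - y).valuation)
      ≤ ‖Upsilon D m s x - Upsilon D m s y‖ := by
  have hpne : (p : ℚ_[p]) ≠ 0 := by
    exact_mod_cast (Nat.cast_ne_zero (R := ℚ_[p])).mpr (Fact.out : p.Prime).ne_zero
  set v := (x - y).valuation with hv
  set z := (p : ℚ_[p]) ^ (-v) * x with hz
  set w := (p : ℚ_[p]) ^ (-v) * y with hw
  have hx : (p : ℚ_[p]) ^ v * z = x := by
    rw [hz, ← mul_assoc, ← zpow_add₀ hpne]
    simp
  have hy : (p : ℚ_[p]) ^ v * w = y := by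
    rw [hw, ← mul_assoc, ← zpow_add₀ hpne]
    simp
  have hnorm : ‖z - w‖ = 1 := by
    rw [hz, hw, ← mul_sub, norm_mul, Padic.norm_p_zpow,
      Padic.norm_eq_zpow_neg_valuation (sub_ne_zero_of_ne hxy), ← hv, neg_neg, ← zpow_add₀]
    · simp
    · have : (1:ℝ) < p := by exact_mod_cast (Fact.out : p.Prime).one_lt
      positivity
  have hmem : ‖Upsilon D m s z - Upsilon D m s w‖
      ∈ {r : ℝ | ∃ x y : ℚ_[p], ‖x - y‖ = 1 ∧
        r = ‖Upsilon D m s x - Upsilon D m s y‖} := ⟨z, w, hnorm, rfl⟩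
  have hle := csInf_le (delta_bddBelow D m s) hmem
  have heq : ‖Upsilon D m s x - Upsilon D m s y‖
      = ‖s‖ ^ v * ‖Upsilon D m s z - Upsilon D m s w‖ := by
    rw [← hx, ← hy, upsilon_scale D m hs0 hs1, norm_mul, norm_zpow]
  rw [heq, mul_comm (Delta D m s)]
  apply mul_le_mul_of_nonneg_left hle
  positivity

lemma upsilon_upper (D : PadicDigits p) (m : ℕ∞) {s : ℂ} (hs0 : 0 < ‖s‖)
    (hs1 : ‖s‖ < 1) (x y : ℚ_[p]) (hxy : x ≠ y) :
    ‖Upsilon D m s x - Upsilon D m s y‖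
      ≤ 2 / (1 - ‖s‖) * ‖s‖ ^ ((x - y).valuation) := by
  set v := (x - y).valuation with hv
  have hdiff : Upsilon D m s x - Upsilon D m s y
      = ∑' n : ℤ, s ^ n * (chiFn D m x n - chiFn D m y n) := by
    rw [Upsilon, Upsilon, ← (upsilon_summable D m hs0 hs1 x).tsum_sub
      (upsilon_summable D m hs0 hs1 y)]
    apply tsum_congr
    intro n
    ring
  rw [hdiff]
  have hval : 2 / (1 - ‖s‖) * ‖s‖ ^ v
      = 2 * ‖s‖ ^ v / (1 - ‖s‖) := by ring
  rw [hval]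
  apply tsum_of_norm_bounded (hasSum_geom_int hs0 hs1 v 2)
  intro n
  by_cases hn : v ≤ n
  · rw [if_pos hn, norm_mul, norm_zpow]
    have h1 : ‖chiFn D m x n - chiFn D m y n‖ ≤ 2 := by
      refine (norm_sub_le _ _).trans ?_
      rw [show ((2:ℝ)) = 1 + 1 by norm_num]
      exact add_le_add (le_of_eq (chi_abs D m x n)) (le_of_eq (chi_abs D m y n))
    calc ‖s‖ ^ n * ‖chiFn D m x n - chiFn D m y n‖ ≤ ‖s‖ ^ n * 2 := by
          apply mul_le_mul_of_nonneg_left h1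
          positivity
      _ = 2 * ‖s‖ ^ n := by ring
  · rw [if_neg hn]
    have hchi : chiFn D m x n = chiFn D m y n :=
      chi_congr D m x y n (fun j hj => digit_eq_of_lt_val D x y hxy j (by omega))
    rw [hchi]
    simp

end Helpers

/-- If `Δ_s^{(m)} > 0` then for all `x ≠ y`,
`Δ_s^{(m)}·|s|^{v(x−y)} ≤ |Υ_s^{(m)}(x) − Υ_s^{(m)}(y)| ≤ (2/(1−|s|))·|s|^{v(x−y)}`;
hence `Υ_s^{(m)}` is a bi-Lipschitz embedding of `(ℚ_p, |·|_p^{1/D_s})` into `ℂ`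
(in particular injective and a homeomorphism onto its image). -/
theorem upsilon_biLipschitz_embedding {p : ℕ} [Fact p.Prime] (D : PadicDigits p) (m : ℕ∞)
    (s : ℂ) (hs0 : 0 < ‖s‖) (hs1 : ‖s‖ < 1)
    (hΔ : 0 < Delta D m s) :
    (∀ x y : ℚ_[p], x ≠ y →
        Delta D m s * ‖s‖ ^ ((x - y).valuation)
            ≤ ‖Upsilon D m s x - Upsilon D m s y‖ ∧
          ‖Upsilon D m s x - Upsilon D m s y‖
            ≤ 2 / (1 - ‖s‖) * ‖s‖ ^ ((x - y).valuation)) ∧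
      (∀ x y : ℚ_[p],
          Delta D m s * ‖x - y‖ ^ (1 / scalingDim p s)
              ≤ ‖Upsilon D m s x - Upsilon D m s y‖ ∧
            ‖Upsilon D m s x - Upsilon D m s y‖
              ≤ 2 / (1 - ‖s‖) * ‖x - y‖ ^ (1 / scalingDim p s)) ∧
      Function.Injective (Upsilon D m s) ∧
      ∃ e : ℚ_[p] ≃ₜ (Set.range (Upsilon D m s)),
        ∀ x : ℚ_[p], (e x : ℂ) = Upsilon D m s x := by
  have hp0 : (0:ℝ) < (p:ℝ) := by exact_mod_cast (Fact.out : p.Prime).pos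
  have hp1 : (1:ℝ) < (p:ℝ) := by exact_mod_cast (Fact.out : p.Prime).one_lt
  have hL : Real.logb p (‖s‖) < 0 := Real.logb_neg hp1 hs0 hs1
  have hα : 1 / scalingDim p s = -Real.logb p (‖s‖) := by
    rw [scalingDim]
    field_simp
  have hαpos : 0 < 1 / scalingDim p s := by rw [hα]; linarith
  set α := 1 / scalingDim p s with hαdef
  have key : ∀ x y : ℚ_[p], x ≠ y →
      ‖x - y‖ ^ α = ‖s‖ ^ ((x - y).valuation) := by
    intro x y hxy
    set v := (x - y).valuation with hv
    rw [Padic.norm_eq_zpow_neg_valuation (sub_ne_zero_of_ne hxy), ← hv, hα]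
    rw [← Real.rpow_intCast (p:ℝ) (-v), ← Real.rpow_mul hp0.le,
      ← Real.rpow_intCast (‖s‖) v,
      ← Real.rpow_logb hp0 (by linarith : (p:ℝ) ≠ 1) hs0,
      ← Real.rpow_mul hp0.le]
    rw [Real.rpow_logb hp0 (by linarith : (p:ℝ) ≠ 1) hs0]
    congr 1
    push_cast
    ring
  have part1 : ∀ x y : ℚ_[p], x ≠ y →
      Delta D m s * ‖s‖ ^ ((x - y).valuation)
          ≤ ‖Upsilon D m s x - Upsilon D m s y‖ ∧
        ‖Upsilon D m s x - Upsilon D m s y‖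
          ≤ 2 / (1 - ‖s‖) * ‖s‖ ^ ((x - y).valuation) :=
    fun x y hxy => ⟨upsilon_lower D m hs0 hs1 x y hxy, upsilon_upper D m hs0 hs1 x y hxy⟩
  have part2 : ∀ x y : ℚ_[p],
      Delta D m s * ‖x - y‖ ^ α
          ≤ ‖Upsilon D m s x - Upsilon D m s y‖ ∧
        ‖Upsilon D m s x - Upsilon D m s y‖
          ≤ 2 / (1 - ‖s‖) * ‖x - y‖ ^ α := by
    intro x y
    by_cases hxy : x = y
    · subst hxy
      simp only [sub_self, norm_zero, map_zero]
      rw [Real.zero_rpow (ne_of_gt hαpos)]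
      simp
    · rw [key x y hxy]
      exact part1 x y hxy
  have hinj : Function.Injective (Upsilon D m s) := by
    intro x y hxy
    by_contra hne
    have h1 := (part1 x y hne).1
    rw [hxy, sub_self, norm_zero] at h1
    have h2 : 0 < Delta D m s * ‖s‖ ^ ((x - y).valuation) := by positivity
    linarith
  refine ⟨part1, part2, hinj, ?_⟩
  have hC : 0 < 2 / (1 - ‖s‖) := by
    apply div_pos <;> linarith
  set C := 2 / (1 - ‖s‖) with hCdef
  have hcont : Continuous (Upsilon D m s) := by
    rw [Metric.continuous_iff]
    intro x ε hε
    refine ⟨(ε / (2 * C)) ^ (1 / α), Real.rpow_pos_of_pos (by positivity) _, fun y hy => ?_⟩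
    have hbound := (part2 y x).2
    have h2 : ‖y - x‖ ^ α ≤ ((ε / (2 * C)) ^ (1 / α)) ^ α := by
      apply Real.rpow_le_rpow (norm_nonneg _) _ hαpos.le
      rw [dist_eq_norm] at hy
      exact hy.le
    have h3 : ((ε / (2 * C)) ^ (1 / α)) ^ α = ε / (2 * C) := by
      rw [← Real.rpow_mul (by positivity : (0:ℝ) ≤ ε / (2 * C)),
        one_div_mul_cancel (ne_of_gt hαpos), Real.rpow_one]
    rw [h3] at h2
    have h4 : C * (‖y - x‖ ^ α) ≤ C * (ε / (2 * C)) := mul_le_mul_of_nonneg_left h2 hC.le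
    have h5 : C * (ε / (2 * C)) = ε / 2 := by field_simp
    rw [Complex.dist_eq]
    calc ‖Upsilon D m s y - Upsilon D m s x‖ ≤ C * ‖y - x‖ ^ α := hbound
      _ ≤ ε / 2 := by rw [← h5]; exact h4
      _ < ε := by linarith
  have hcontinv : ∀ (x : ℚ_[p]) (ε : ℝ), 0 < ε → ∀ y : ℚ_[p],
      dist (Upsilon D m s y) (Upsilon D m s x) < Delta D m s * ε ^ α → dist y x < ε := by
    intro x ε hε y hy
    by_contra hge
    push_neg at hge
    have h1 : ε ^ α ≤ ‖y - x‖ ^ α := by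
      apply Real.rpow_le_rpow hε.le _ hαpos.le
      rw [dist_eq_norm] at hge
      exact hge
    have h2 := (part2 y x).1
    rw [Complex.dist_eq] at hy
    have h3 : Delta D m s * ε ^ α ≤ Delta D m s * ‖y - x‖ ^ α :=
      mul_le_mul_of_nonneg_left h1 hΔ.le
    linarith
  refine ⟨Homeomorph.mk (Equiv.ofInjective _ hinj) ?_ ?_, fun x => rfl⟩
  · exact Continuous.subtype_mk hcont _
  · rw [Metric.continuous_iff]
    rintro ⟨u, x, rfl⟩ ε hε
    refine ⟨Delta D m s * ε ^ α, by positivity, ?_⟩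
    rintro ⟨w, y, rfl⟩ hd
    have hd2 : dist (Upsilon D m s y) (Upsilon D m s x) < Delta D m s * ε ^ α := by
      rw [Subtype.dist_eq] at hd
      exact hd
    have hlt := hcontinv x ε hε y hd2
    have hix : (Equiv.ofInjective _ hinj).symm ⟨Upsilon D m s x, ⟨x, rfl⟩⟩ = x :=
      (Equiv.ofInjective _ hinj).injective (by simp)
    have hiy : (Equiv.ofInjective _ hinj).symm ⟨Upsilon D m s y, ⟨y, rfl⟩⟩ = y :=
      (Equiv.ofInjective _ hinj).injective (by simp)
    simp only [Equiv.invFun_as_coe]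
    rw [hix, hiy]
    exact hlt
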